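/- For every real x, tr(A_x⁵ · B_x⁵) − p_{5,5}(A_x, B_x) = (5x⁴/126)·(5475x⁶ − 1186x⁵ − 975x⁴ − 626x³ − 335x² + 522x − 1). -/

import Mathlib

/-!
The sum `S(n, m)` of all words with `n` letters `A_x` and `m` letters `B_x` satisfies
`S(n+1, m+1) = A_x S(n, m+1) + B_x S(n+1, m)` (split off the first letter), with `S(n, 0) = A_xⁿ`
and `S(0, m) = B_xᵐ`. Its entries are integer polynomials in `x`, and left multiplication by
`A_x` or `B_x` acts on their coefficient lists by subtractions and shifts only. So the
recursion can be run on coefficient lists, where `decide` evaluates `tr S(5, 5)` and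
`tr(A_x⁵ B_x⁵)` exactly; both sides of the identity are then explicit polynomials.
-/

open Matrix

/-- The matrix `A_x`. -/
def Amat (x : ℝ) : Matrix (Fin 3) (Fin 3) ℝ :=
  !![1, 0, 0; 0, x, -x; 0, -x, x]

/-- The matrix `B_x`. -/
def Bmat (x : ℝ) : Matrix (Fin 3) (Fin 3) ℝ :=
  !![x, -x, 0; -x, x, 0; 0, 0, 1]

/-- The (finite) set `𝒲_{n,m}` of words with exactly `n` letters `A` (`true`)
and `m` letters `B` (`false`). -/
def words (n m : ℕ) : Finset (List Bool) :=
  (List.replicate n true ++ List.replicate m false).permutations.toFinset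

/-- `tr w(A_x, B_x)`: the trace of the word `w` evaluated at `(A_x, B_x)`. -/
noncomputable def wtr (x : ℝ) (w : List Bool) : ℝ :=
  ((w.map fun b => if b = true then Amat x else Bmat x).prod).trace

/-- The averaged word trace `p_{n,m}(A_x, B_x)`. -/
noncomputable def pnm (n m : ℕ) (x : ℝ) : ℝ :=
  (1 / ((n + m).choose n)) * ∑ w ∈ words n m, wtr x w

theorem mem_words_iff_count {n m : ℕ} {l : List Bool} :
    l ∈ words n m ↔ l.count true = n ∧ l.count false = m := by
  have hsub : l ⊆ [true, false] := fun b _ => by cases b <;> simp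
  simp [words, List.perm_replicate_append_replicate (by decide : true ≠ false), hsub]

theorem words_zero_right (n : ℕ) : words n 0 = {List.replicate n true} := by
  ext l
  simp [words, List.perm_replicate]

theorem words_zero_left (m : ℕ) : words 0 m = {List.replicate m false} := by
  ext l
  simp [words, List.perm_replicate]

theorem words_succ_succ (n m : ℕ) :
    words (n + 1) (m + 1) =
      (words n (m + 1)).image (List.cons true) ∪ (words (n + 1) m).image (List.cons false) := by
  ext l
  simp only [Finset.mem_union, Finset.mem_image, mem_words_iff_count]
  constructor
  · rintro ⟨htrue, hfalse⟩
    match l with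
    | [] => simp at htrue
    | true :: t => exact Or.inl ⟨t, ⟨by simpa using htrue, by simpa using hfalse⟩, rfl⟩
    | false :: t => exact Or.inr ⟨t, ⟨by simpa using htrue, by simpa using hfalse⟩, rfl⟩
  · rintro (⟨t, ⟨htrue, hfalse⟩, rfl⟩ | ⟨t, ⟨htrue, hfalse⟩, rfl⟩) <;>
      simp [htrue, hfalse]

section WordSum

variable {R : Type*} [Semiring R] (a b : R)

def wordSum (n m : ℕ) : R :=
  ∑ w ∈ words n m, (w.map fun c => if c = true then a else b).prod

theorem wordSum_zero_right (n : ℕ) : wordSum a b n 0 = a ^ n := by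
  simp [wordSum, words_zero_right, List.map_replicate]

theorem wordSum_zero_left (m : ℕ) : wordSum a b 0 m = b ^ m := by
  simp [wordSum, words_zero_left, List.map_replicate]

theorem wordSum_succ_succ (n m : ℕ) :
    wordSum a b (n + 1) (m + 1) = a * wordSum a b n (m + 1) + b * wordSum a b (n + 1) m := by
  have hdisj : Disjoint ((words n (m + 1)).image (List.cons true))
      ((words (n + 1) m).image (List.cons false)) := by
    simp [Finset.disjoint_left]
  rw [wordSum, words_succ_succ, Finset.sum_union hdisj,
    Finset.sum_image fun _ _ _ _ h => List.cons_injective h,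
    Finset.sum_image fun _ _ _ _ h => List.cons_injective h]
  simp [wordSum, Finset.mul_sum]

end WordSum

theorem pnm_eq_trace_wordSum (n m : ℕ) (x : ℝ) :
    pnm n m x = ((n + m).choose n : ℝ)⁻¹ * (wordSum (Amat x) (Bmat x) n m).trace := by
  rw [pnm, wordSum, trace_sum, one_div]
  rfl

section Coefficients

def evalCoeffs {R : Type*} [Ring R] (x : R) : List ℤ → R
  | [] => 0
  | a :: p => a + x * evalCoeffs x p

def addCoeffs : List ℤ → List ℤ → List ℤ
  | [], q => q
  | a :: p, [] => a :: p
  | a :: p, b :: q => (a + b) :: addCoeffs p q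

def subCoeffs (p q : List ℤ) : List ℤ :=
  addCoeffs p (q.map Neg.neg)

variable {R : Type*} [Ring R] (x : R)

theorem evalCoeffs_addCoeffs (p q : List ℤ) :
    evalCoeffs x (addCoeffs p q) = evalCoeffs x p + evalCoeffs x q := by
  induction p, q using addCoeffs.induct with
  | case1 q => simp [addCoeffs, evalCoeffs]
  | case2 a p => simp [addCoeffs, evalCoeffs]
  | case3 a p b q ih =>
    simp only [addCoeffs, evalCoeffs, ih, Int.cast_add, mul_add]
    abel

theorem evalCoeffs_map_neg (p : List ℤ) : evalCoeffs x (p.map Neg.neg) = -evalCoeffs x p := by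
  induction p with
  | nil => simp [evalCoeffs]
  | cons a p ih => rw [List.map_cons, evalCoeffs, evalCoeffs, ih, Int.cast_neg, mul_neg, neg_add]

theorem evalCoeffs_subCoeffs (p q : List ℤ) :
    evalCoeffs x (subCoeffs p q) = evalCoeffs x p - evalCoeffs x q := by
  rw [subCoeffs, evalCoeffs_addCoeffs, evalCoeffs_map_neg, sub_eq_add_neg]

abbrev CoeffMatrix := Matrix (Fin 3) (Fin 3) (List ℤ)

def oneCoeffMatrix : CoeffMatrix :=
  Matrix.of fun i j => if i = j then [1] else []

def addCoeffMatrix (M N : CoeffMatrix) : CoeffMatrix :=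
  Matrix.of fun i j => addCoeffs (M i j) (N i j)

def traceCoeffs (M : CoeffMatrix) : List ℤ :=
  addCoeffs (M 0 0) (addCoeffs (M 1 1) (M 2 2))

theorem map_oneCoeffMatrix : oneCoeffMatrix.map (evalCoeffs x) = 1 := by
  ext i j
  by_cases h : i = j <;> simp [oneCoeffMatrix, evalCoeffs, h, one_apply]

theorem map_addCoeffMatrix (M N : CoeffMatrix) :
    (addCoeffMatrix M N).map (evalCoeffs x) = M.map (evalCoeffs x) + N.map (evalCoeffs x) := by
  ext i j
  simp [addCoeffMatrix, evalCoeffs_addCoeffs]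

theorem evalCoeffs_traceCoeffs (M : CoeffMatrix) :
    evalCoeffs x (traceCoeffs M) = (M.map (evalCoeffs x)).trace := by
  simp [traceCoeffs, evalCoeffs_addCoeffs, trace_fin_three, add_assoc]

end Coefficients

section LeftMultiplication

-- Prepending `0` to a coefficient list multiplies the polynomial by `x`.
def amatMulCoeffs (M : CoeffMatrix) : CoeffMatrix :=
  Matrix.of ![M 0, fun j => 0 :: subCoeffs (M 1 j) (M 2 j), fun j => 0 :: subCoeffs (M 2 j) (M 1 j)]

def bmatMulCoeffs (M : CoeffMatrix) : CoeffMatrix :=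
  Matrix.of ![fun j => 0 :: subCoeffs (M 0 j) (M 1 j), fun j => 0 :: subCoeffs (M 1 j) (M 0 j), M 2]

variable (x : ℝ)

theorem map_amatMulCoeffs (M : CoeffMatrix) :
    (amatMulCoeffs M).map (evalCoeffs x) = Amat x * M.map (evalCoeffs x) := by
  ext i j
  fin_cases i <;>
    simp [amatMulCoeffs, Amat, mul_apply, Fin.sum_univ_three, evalCoeffs, evalCoeffs_subCoeffs] <;>
    ring

theorem map_bmatMulCoeffs (M : CoeffMatrix) :
    (bmatMulCoeffs M).map (evalCoeffs x) = Bmat x * M.map (evalCoeffs x) := by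
  ext i j
  fin_cases i <;>
    simp [bmatMulCoeffs, Bmat, mul_apply, Fin.sum_univ_three, evalCoeffs, evalCoeffs_subCoeffs] <;>
    ring

theorem map_iterate_amatMulCoeffs (k : ℕ) (M : CoeffMatrix) :
    (amatMulCoeffs^[k] M).map (evalCoeffs x) = Amat x ^ k * M.map (evalCoeffs x) := by
  induction k with
  | zero => simp
  | succ k ih => rw [Function.iterate_succ_apply', map_amatMulCoeffs, ih, pow_succ', mul_assoc]

theorem map_iterate_bmatMulCoeffs (k : ℕ) (M : CoeffMatrix) :
    (bmatMulCoeffs^[k] M).map (evalCoeffs x) = Bmat x ^ k * M.map (evalCoeffs x) := by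
  induction k with
  | zero => simp
  | succ k ih => rw [Function.iterate_succ_apply', map_bmatMulCoeffs, ih, pow_succ', mul_assoc]

end LeftMultiplication

-- Computes row `n + 1` of the word-sum table from row `n`; splitting the table into rows makes
-- the recursion structural, so that `decide` can unfold it.
def nextWordSumRow (row : ℕ → CoeffMatrix) : ℕ → CoeffMatrix
  | 0 => amatMulCoeffs (row 0)
  | m + 1 => addCoeffMatrix (amatMulCoeffs (row (m + 1))) (bmatMulCoeffs (nextWordSumRow row m))

def wordSumCoeffs : ℕ → ℕ → CoeffMatrix
  | 0 => fun m => bmatMulCoeffs^[m] oneCoeffMatrix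
  | n + 1 => nextWordSumRow (wordSumCoeffs n)

theorem map_wordSumCoeffs (x : ℝ) (n m : ℕ) :
    (wordSumCoeffs n m).map (evalCoeffs x) = wordSum (Amat x) (Bmat x) n m := by
  induction n generalizing m with
  | zero =>
    rw [wordSumCoeffs, map_iterate_bmatMulCoeffs, map_oneCoeffMatrix, mul_one, wordSum_zero_left]
  | succ n ihn =>
    induction m with
    | zero =>
      rw [wordSumCoeffs, nextWordSumRow, map_amatMulCoeffs, ihn, wordSum_zero_right,
        wordSum_zero_right, pow_succ']
    | succ m ihm =>
      rw [wordSumCoeffs, nextWordSumRow, map_addCoeffMatrix, map_amatMulCoeffs,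
        map_bmatMulCoeffs, ihn, ← wordSumCoeffs, ihm, wordSum_succ_succ]

theorem traceCoeffs_wordSumCoeffs_five_five :
    traceCoeffs (wordSumCoeffs 5 5) = [0, 0, 0, 0, 10, 2844, 3350, 6260, 9750, 11860, 9762] := by
  decide

theorem traceCoeffs_pow_mul_pow_five :
    traceCoeffs (amatMulCoeffs^[5] (wordSumCoeffs 0 5)) = [0, 0, 0, 0, 0, 32, 0, 0, 0, 0, 256] := by
  decide

theorem stmt_14 : ∀ x : ℝ,
    (Amat x ^ 5 * Bmat x ^ 5).trace - pnm 5 5 x =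
      (5 * x ^ 4 / 126) *
        (5475 * x ^ 6 - 1186 * x ^ 5 - 975 * x ^ 4 - 626 * x ^ 3 - 335 * x ^ 2 +
          522 * x - 1) := by
  intro x
  have hword : (Amat x ^ 5 * Bmat x ^ 5).trace = 32 * x ^ 5 + 256 * x ^ 10 := by
    rw [← wordSum_zero_left (Amat x) (Bmat x) 5, ← map_wordSumCoeffs,
      ← map_iterate_amatMulCoeffs, ← evalCoeffs_traceCoeffs, traceCoeffs_pow_mul_pow_five]
    simp only [evalCoeffs]
    push_cast
    ring
  have hsum : pnm 5 5 x = (10 * x ^ 4 + 2844 * x ^ 5 + 3350 * x ^ 6 + 6260 * x ^ 7 +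
      9750 * x ^ 8 + 11860 * x ^ 9 + 9762 * x ^ 10) / 252 := by
    rw [pnm_eq_trace_wordSum, ← map_wordSumCoeffs, ← evalCoeffs_traceCoeffs,
      traceCoeffs_wordSumCoeffs_five_five]
    norm_num [evalCoeffs, Nat.choose]
    ring
  rw [hword, hsum]
  ring
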